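/- Let F be a Minkowski norm on a finite-dimensional real vector space E, and let α ∈ E* \ {0} with v := L*(α) ∈ E \ {0} its Legendre transform. Let G_v : E → E* be the linear isomorphism w ↦ g_v(w, ·) induced by the fundamental tensor of F at v, and let G*_α : E* → E be the linear map β ↦ g*_α(β, ·) induced (via the canonical identification E** ≅ E) by the fundamental tensor g*_α of the dual norm F* at α. Then G*_α = (G_v)^{-1}. (In coordinates: g*_{ij}(α) = g^{ij}(L*(α)), where (g^{ij}(v)) is the inverse matrix of (g_{ij}(v)).) -/

import Mathlib

/-- The fundamental tensor of `F` at `v`: `g_v(w₁, w₂) := (1/2)·D²(F²)(v)[w₁, w₂]`,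
given by the second Fréchet derivative of `F²` at `v`. -/
noncomputable def fundamentalTensor {E : Type*} [NormedAddCommGroup E] [NormedSpace ℝ E]
    (F : E → ℝ) (v w₁ w₂ : E) : ℝ :=
  (1 / 2 : ℝ) * iteratedFDeriv ℝ 2 (fun x => F x ^ 2) v ![w₁, w₂]

/-- A **Minkowski norm** on a real vector space `E`: `F ≥ 0`, positive away from `0`,
smooth on `E \ {0}`, positively `1`-homogeneous, and with positive definite
fundamental tensor `g_v` for every `v ≠ 0`. -/
structure IsMinkowskiNorm {E : Type*} [NormedAddCommGroup E] [NormedSpace ℝ E]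
    (F : E → ℝ) : Prop where
  nonneg : ∀ v : E, 0 ≤ F v
  pos : ∀ v : E, v ≠ 0 → 0 < F v
  smooth : ContDiffOn ℝ (⊤ : ℕ∞) F {(0 : E)}ᶜ
  homog : ∀ c : ℝ, 0 ≤ c → ∀ v : E, F (c • v) = c * F v
  posdef : ∀ v : E, v ≠ 0 → ∀ w : E, w ≠ 0 → 0 < fundamentalTensor F v w w

/-- The dual norm `F*(α) := sup {α(v) : F(v) ≤ 1}` on the dual space. -/
noncomputable def dualNorm {E : Type*} [NormedAddCommGroup E] [NormedSpace ℝ E]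
    (F : E → ℝ) (α : E →L[ℝ] ℝ) : ℝ :=
  sSup ((fun v => α v) '' {v : E | F v ≤ 1})

section Aux

variable {E : Type*} [NormedAddCommGroup E] [NormedSpace ℝ E]
variable {F : E → ℝ}

lemma mink_zero (hF : IsMinkowskiNorm F) : F 0 = 0 := by
  have := hF.homog 0 le_rfl 0
  simpa using this

lemma mink_continuous [FiniteDimensional ℝ E] (hF : IsMinkowskiNorm F) : Continuous F := by
  rw [continuous_iff_continuousAt]
  intro u
  rcases eq_or_ne u 0 with rfl | hu
  · -- continuity at 0
    rcases subsingleton_or_nontrivial E with hE | hE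
    · have : ∀ x : E, x = 0 := fun x => Subsingleton.elim x 0
      have : F = fun _ => 0 := funext fun x => by rw [this x, mink_zero hF]
      rw [this]; exact continuousAt_const
    · obtain ⟨x₀, hx₀⟩ := NormedSpace.sphere_nonempty (E := E) (x := (0:E)) (r := 1) |>.2 zero_le_one
      have hsc : IsCompact (Metric.sphere (0:E) 1) := isCompact_sphere 0 1
      have hFcont : ContinuousOn F (Metric.sphere (0:E) 1) := by
        apply (hF.smooth.continuousOn).mono
        intro x hx
        simp only [Set.mem_compl_iff, Set.mem_singleton_iff]
        intro h
        rw [h] at hx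
        simp at hx
      obtain ⟨xM, _, hxM⟩ := hsc.exists_isMaxOn ⟨x₀, hx₀⟩ hFcont
      set M := F xM with hM
      have hub : ∀ x : E, F x ≤ M * ‖x‖ := by
        intro x
        rcases eq_or_ne x 0 with rfl | hx
        · simp [mink_zero hF]
        · have hnx : (0:ℝ) < ‖x‖ := norm_pos_iff.2 hx
          have h1 : F x = ‖x‖ * F (‖x‖⁻¹ • x) := by
            rw [← hF.homog ‖x‖ (norm_nonneg x) (‖x‖⁻¹ • x), smul_smul,
              mul_inv_cancel₀ hnx.ne', one_smul]
          have h2 : (‖x‖⁻¹ • x) ∈ Metric.sphere (0:E) 1 := by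
            simp [norm_smul, abs_of_nonneg (inv_nonneg.2 hnx.le), inv_mul_cancel₀ hnx.ne']
          have := hxM h2
          rw [h1]
          calc ‖x‖ * F (‖x‖⁻¹ • x) ≤ ‖x‖ * M := by
                exact mul_le_mul_of_nonneg_left this hnx.le
            _ = M * ‖x‖ := mul_comm _ _
      have : Filter.Tendsto F (nhds 0) (nhds 0) := by
        apply squeeze_zero (fun t => hF.nonneg t) hub
        simpa using (continuous_norm.tendsto (0:E)).const_mul M
      simpa [ContinuousAt, mink_zero hF] using this
  · exact (hF.smooth.continuousOn.continuousAt (isOpen_compl_singleton.mem_nhds hu))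

lemma mink_lower [FiniteDimensional ℝ E] [Nontrivial E] (hF : IsMinkowskiNorm F) :
    ∃ m : ℝ, 0 < m ∧ ∀ u : E, m * ‖u‖ ≤ F u := by
  obtain ⟨x₀, hx₀⟩ := NormedSpace.sphere_nonempty (E := E) (x := (0:E)) (r := 1) |>.2 zero_le_one
  have hsc : IsCompact (Metric.sphere (0:E) 1) := isCompact_sphere 0 1
  obtain ⟨xm, hxmem, hxm⟩ := hsc.exists_isMinOn ⟨x₀, hx₀⟩ ((mink_continuous hF).continuousOn)
  have hxne : xm ≠ 0 := by
    intro h; rw [h] at hxmem; simp at hxmem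
  refine ⟨F xm, hF.pos xm hxne, fun u => ?_⟩
  rcases eq_or_ne u 0 with rfl | hu
  · simp [mink_zero hF]
  · have hnu : (0:ℝ) < ‖u‖ := norm_pos_iff.2 hu
    have h1 : F u = ‖u‖ * F (‖u‖⁻¹ • u) := by
      rw [← hF.homog ‖u‖ (norm_nonneg u) (‖u‖⁻¹ • u), smul_smul,
        mul_inv_cancel₀ hnu.ne', one_smul]
    have h2 : (‖u‖⁻¹ • u) ∈ Metric.sphere (0:E) 1 := by
      simp [norm_smul, abs_of_nonneg (inv_nonneg.2 hnu.le), inv_mul_cancel₀ hnu.ne']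
    have := hxm h2
    rw [h1]
    calc F xm * ‖u‖ ≤ F (‖u‖⁻¹ • u) * ‖u‖ := mul_le_mul_of_nonneg_right this hnu.le
      _ = ‖u‖ * F (‖u‖⁻¹ • u) := mul_comm _ _


lemma dual_bddAbove [FiniteDimensional ℝ E] [Nontrivial E] (hF : IsMinkowskiNorm F)
    (α : E →L[ℝ] ℝ) : BddAbove ((fun v => α v) '' {v : E | F v ≤ 1}) := by
  obtain ⟨m, hm, hlow⟩ := mink_lower hF
  refine ⟨‖α‖ * m⁻¹, ?_⟩
  rintro y ⟨w, hw, rfl⟩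
  have h1 : ‖w‖ ≤ m⁻¹ := by
    rw [← one_div, le_div_iff₀ hm, mul_comm]
    exact le_trans (hlow w) hw
  calc α w ≤ |α w| := le_abs_self _
    _ ≤ ‖α‖ * ‖w‖ := α.le_opNorm w
    _ ≤ ‖α‖ * m⁻¹ := mul_le_mul_of_nonneg_left h1 (norm_nonneg α)

lemma dual_set_nonempty (hF : IsMinkowskiNorm F) (α : E →L[ℝ] ℝ) :
    ((fun v => α v) '' {v : E | F v ≤ 1}).Nonempty :=
  ⟨α 0, ⟨0, by simp [mink_zero hF]⟩⟩

lemma dual_nonneg [FiniteDimensional ℝ E] [Nontrivial E] (hF : IsMinkowskiNorm F)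
    (α : E →L[ℝ] ℝ) : 0 ≤ dualNorm F α := by
  have h0 : α 0 ∈ (fun v => α v) '' {v : E | F v ≤ 1} := ⟨0, by simp [mink_zero hF]⟩
  have := le_csSup (dual_bddAbove hF α) h0
  simpa [dualNorm] using this

lemma le_dualNorm [FiniteDimensional ℝ E] [Nontrivial E] (hF : IsMinkowskiNorm F)
    (α : E →L[ℝ] ℝ) {w : E} (hw : F w ≤ 1) : α w ≤ dualNorm F α :=
  le_csSup (dual_bddAbove hF α) ⟨w, hw, rfl⟩

lemma dualNorm_le [FiniteDimensional ℝ E] (hF : IsMinkowskiNorm F) (α : E →L[ℝ] ℝ)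
    {b : ℝ} (hb : ∀ w : E, F w ≤ 1 → α w ≤ b) : dualNorm F α ≤ b := by
  apply csSup_le (dual_set_nonempty hF α)
  rintro y ⟨w, hw, rfl⟩
  exact hb w hw

/-- Fundamental inequality for the dual norm. -/
lemma apply_le_dual_mul [FiniteDimensional ℝ E] [Nontrivial E] (hF : IsMinkowskiNorm F)
    (α : E →L[ℝ] ℝ) (u : E) : α u ≤ dualNorm F α * F u := by
  rcases eq_or_ne u 0 with rfl | hu
  · simp [mink_zero hF]
  · have hFu : 0 < F u := hF.pos u hu
    have h1 : F ((F u)⁻¹ • u) = 1 := by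
      rw [hF.homog _ (inv_nonneg.2 hFu.le), inv_mul_cancel₀ hFu.ne']
    have h2 := le_dualNorm hF α (w := (F u)⁻¹ • u) (le_of_eq h1)
    rw [map_smul] at h2
    have h3 : (F u)⁻¹ * α u ≤ dualNorm F α := by simpa using h2
    calc α u = F u * ((F u)⁻¹ * α u) := by field_simp
      _ ≤ F u * dualNorm F α := mul_le_mul_of_nonneg_left h3 hFu.le
      _ = dualNorm F α * F u := mul_comm _ _


lemma psi_contDiffOn (hF : IsMinkowskiNorm F) :
    ContDiffOn ℝ (⊤ : ℕ∞) (fun x => F x ^ 2) {(0:E)}ᶜ := hF.smooth.pow 2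

lemma psi_contDiffAt (hF : IsMinkowskiNorm F) {u : E} (hu : u ≠ 0) :
    ContDiffAt ℝ (⊤ : ℕ∞) (fun x => F x ^ 2) u :=
  (psi_contDiffOn hF).contDiffAt (isOpen_compl_singleton.mem_nhds hu)

lemma dpsi_contDiffOn (hF : IsMinkowskiNorm F) :
    ContDiffOn ℝ (⊤ : ℕ∞) (fderiv ℝ fun x => F x ^ 2) {(0:E)}ᶜ :=
  (psi_contDiffOn hF).fderiv_of_isOpen isOpen_compl_singleton (by simp)

lemma dpsi_contDiffAt (hF : IsMinkowskiNorm F) {u : E} (hu : u ≠ 0) :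
    ContDiffAt ℝ (⊤ : ℕ∞) (fderiv ℝ fun x => F x ^ 2) u :=
  (dpsi_contDiffOn hF).contDiffAt (isOpen_compl_singleton.mem_nhds hu)

lemma smul_ne_zero_iff' {c : ℝ} (hc : 0 < c) {u : E} (hu : u ≠ 0) : c • u ≠ 0 :=
  smul_ne_zero hc.ne' hu

/-- Homogeneity of the derivative of `F²`. -/
lemma fderiv_psi_homog (hF : IsMinkowskiNorm F) {u : E} (hu : u ≠ 0) {c : ℝ} (hc : 0 < c) :
    fderiv ℝ (fun x => F x ^ 2) (c • u) = c • fderiv ℝ (fun x => F x ^ 2) u := by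
  have hdu : DifferentiableAt ℝ (fun x => F x ^ 2) u :=
    (psi_contDiffAt hF hu).differentiableAt (by simp)
  have hdc : DifferentiableAt ℝ (fun x => F x ^ 2) (c • u) :=
    (psi_contDiffAt hF (smul_ne_zero_iff' hc hu)).differentiableAt (by simp)
  have h1 : HasFDerivAt (fun x : E => c • x) (c • ContinuousLinearMap.id ℝ E) u := by
    exact (hasFDerivAt_id u).const_smul c
  have hcomp : HasFDerivAt (fun x : E => F (c • x) ^ 2)
      ((fderiv ℝ (fun x => F x ^ 2) (c • u)).comp (c • ContinuousLinearMap.id ℝ E)) u :=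
    HasFDerivAt.comp u hdc.hasFDerivAt h1
  have heq : (fun x : E => F (c • x) ^ 2) = fun x : E => c ^ 2 • (F x ^ 2) := by
    funext x
    rw [hF.homog c hc.le x]
    simp only [smul_eq_mul]
    ring
  rw [heq] at hcomp
  have hcomp2 : HasFDerivAt (fun x : E => c ^ 2 • (F x ^ 2))
      (c ^ 2 • fderiv ℝ (fun x => F x ^ 2) u) u := hdu.hasFDerivAt.const_smul (c ^ 2)
  have huniq := hcomp.unique hcomp2
  have hkey : c • fderiv ℝ (fun x => F x ^ 2) (c • u) = c ^ 2 • fderiv ℝ (fun x => F x ^ 2) u := by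
    rw [← huniq]
    ext w
    simp [mul_comm]
  have := congrArg (fun T => c⁻¹ • T) hkey
  simp only [smul_smul, inv_mul_cancel₀ hc.ne', one_smul] at this
  rw [this]
  congr 1
  field_simp

/-- Euler: `Dψ(u)(u) = 2ψ(u)` for `ψ = F²`. -/
lemma fderiv_psi_self (hF : IsMinkowskiNorm F) {u : E} (hu : u ≠ 0) :
    fderiv ℝ (fun x => F x ^ 2) u u = 2 * F u ^ 2 := by
  have h1 : HasDerivAt (fun c : ℝ => c • u) u 1 := by
    simpa using (hasDerivAt_id (1:ℝ)).smul_const u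
  have h2 : HasFDerivAt (fun x => F x ^ 2) (fderiv ℝ (fun x => F x ^ 2) u) ((1:ℝ) • u) := by
    rw [one_smul]
    exact ((psi_contDiffAt hF hu).differentiableAt (by simp)).hasFDerivAt
  have hφ : HasDerivAt (fun c : ℝ => F (c • u) ^ 2) (fderiv ℝ (fun x => F x ^ 2) u u) 1 := by
    simpa [Function.comp_def] using h2.comp_hasDerivAt 1 h1
  have hev : (fun c : ℝ => c ^ 2 * F u ^ 2) =ᶠ[nhds 1] (fun c : ℝ => F (c • u) ^ 2) := by
    filter_upwards [eventually_gt_nhds (zero_lt_one (α := ℝ))] with c hc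
    rw [hF.homog c hc.le u]
    ring
  have hφ2 : HasDerivAt (fun c : ℝ => c ^ 2 * F u ^ 2) (fderiv ℝ (fun x => F x ^ 2) u u) 1 :=
    hφ.congr_of_eventuallyEq hev
  have hφ3 : HasDerivAt (fun c : ℝ => c ^ 2 * F u ^ 2) (2 * F u ^ 2) 1 := by
    simpa using (hasDerivAt_pow 2 (1:ℝ)).mul_const (F u ^ 2)
  exact hφ2.unique hφ3

/-- Euler at second order: `D²ψ(u)(u,·) = Dψ(u)`. -/
lemma fderiv2_psi_self (hF : IsMinkowskiNorm F) {u : E} (hu : u ≠ 0) :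
    fderiv ℝ (fderiv ℝ fun x => F x ^ 2) u u = fderiv ℝ (fun x => F x ^ 2) u := by
  have h1 : HasDerivAt (fun c : ℝ => c • u) u 1 := by
    simpa using (hasDerivAt_id (1:ℝ)).smul_const u
  have h2 : HasFDerivAt (fderiv ℝ fun x => F x ^ 2)
      (fderiv ℝ (fderiv ℝ fun x => F x ^ 2) u) ((1:ℝ) • u) := by
    rw [one_smul]
    exact ((dpsi_contDiffAt hF hu).differentiableAt (by simp)).hasFDerivAt
  have hκ : HasDerivAt (fun c : ℝ => fderiv ℝ (fun x => F x ^ 2) (c • u))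
      (fderiv ℝ (fderiv ℝ fun x => F x ^ 2) u u) 1 := by
    simpa [Function.comp_def] using h2.comp_hasDerivAt 1 h1
  have hev : (fun c : ℝ => c • fderiv ℝ (fun x => F x ^ 2) u) =ᶠ[nhds 1]
      (fun c : ℝ => fderiv ℝ (fun x => F x ^ 2) (c • u)) := by
    filter_upwards [eventually_gt_nhds (zero_lt_one (α := ℝ))] with c hc
    rw [fderiv_psi_homog hF hu hc]
  have hκ2 : HasDerivAt (fun c : ℝ => c • fderiv ℝ (fun x => F x ^ 2) u)
      (fderiv ℝ (fderiv ℝ fun x => F x ^ 2) u u) 1 := hκ.congr_of_eventuallyEq hev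
  have hκ3 : HasDerivAt (fun c : ℝ => c • fderiv ℝ (fun x => F x ^ 2) u)
      (fderiv ℝ (fun x => F x ^ 2) u) 1 := by
    simpa using (hasDerivAt_id (1:ℝ)).smul_const (fderiv ℝ (fun x => F x ^ 2) u)
  exact hκ2.unique hκ3

/-- The fundamental tensor in terms of iterated `fderiv`. -/
lemma fundamentalTensor_eq (F : E → ℝ) (u w₁ w₂ : E) :
    fundamentalTensor F u w₁ w₂
      = (1/2 : ℝ) * fderiv ℝ (fderiv ℝ fun x => F x ^ 2) u w₁ w₂ := by
  rw [fundamentalTensor, iteratedFDeriv_two_apply]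
  simp


/-- Convexity along a segment avoiding the origin. -/
lemma segment_ineq (hF : IsMinkowskiNorm F) {u w' : E}
    (hseg : ∀ t ∈ Set.Icc (0:ℝ) 1, u + t • (w' - u) ≠ 0) :
    fderiv ℝ (fun x => F x ^ 2) u (w' - u) ≤ F w' ^ 2 - F u ^ 2 := by
  rcases eq_or_ne w' u with rfl | hne
  · simp
  have hwu : w' - u ≠ 0 := sub_ne_zero.2 hne
  set z : ℝ → E := fun t => u + t • (w' - u) with hz
  set g : ℝ → ℝ := fun t => fderiv ℝ (fun x => F x ^ 2) (z t) (w' - u) with hg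
  have hzder : ∀ t : ℝ, HasDerivAt z (w' - u) t := by
    intro t
    exact (((hasDerivAt_id t).smul_const (w' - u)).const_add u).congr_deriv (one_smul ℝ _)
  have hhder : ∀ t ∈ Set.Icc (0:ℝ) 1, HasDerivAt (fun s => F (z s) ^ 2) (g t) t := by
    intro t ht
    have hzt : z t ≠ 0 := hseg t ht
    have h2 : HasFDerivAt (fun x => F x ^ 2) (fderiv ℝ (fun x => F x ^ 2) (z t)) (z t) :=
      ((psi_contDiffAt hF hzt).differentiableAt (by simp)).hasFDerivAt
    exact h2.comp_hasDerivAt t (hzder t)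
  have hgder : ∀ t ∈ Set.Icc (0:ℝ) 1,
      HasDerivAt g (fderiv ℝ (fderiv ℝ fun x => F x ^ 2) (z t) (w' - u) (w' - u)) t := by
    intro t ht
    have hzt : z t ≠ 0 := hseg t ht
    have h2 : HasFDerivAt (fderiv ℝ fun x => F x ^ 2)
        (fderiv ℝ (fderiv ℝ fun x => F x ^ 2) (z t)) (z t) :=
      ((dpsi_contDiffAt hF hzt).differentiableAt (by simp)).hasFDerivAt
    have h3 : HasDerivAt (fun s => fderiv ℝ (fun x => F x ^ 2) (z s))
        (fderiv ℝ (fderiv ℝ fun x => F x ^ 2) (z t) (w' - u)) t :=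
      h2.comp_hasDerivAt t (hzder t)
    have := h3.clm_apply (hasDerivAt_const t (w' - u))
    simpa only [map_zero, add_zero] using this
  have hgnonneg : ∀ t ∈ Set.Icc (0:ℝ) 1,
      0 ≤ fderiv ℝ (fderiv ℝ fun x => F x ^ 2) (z t) (w' - u) (w' - u) := by
    intro t ht
    have := hF.posdef (z t) (hseg t ht) (w' - u) hwu
    rw [fundamentalTensor_eq] at this
    linarith
  have hgmono : MonotoneOn g (Set.Icc (0:ℝ) 1) := by
    apply monotoneOn_of_deriv_nonneg (convex_Icc 0 1)
    · exact fun t ht => (hgder t ht).continuousAt.continuousWithinAt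
    · intro t ht
      rw [interior_Icc] at ht
      exact ((hgder t (Set.mem_Icc_of_Ioo ht)).differentiableAt).differentiableWithinAt
    · intro t ht
      rw [interior_Icc] at ht
      rw [(hgder t (Set.mem_Icc_of_Ioo ht)).deriv]
      exact hgnonneg t (Set.mem_Icc_of_Ioo ht)
  obtain ⟨c, hc, hceq⟩ := exists_hasDerivAt_eq_slope (fun s => F (z s) ^ 2) g zero_lt_one
    (fun t ht => (hhder t ht).continuousAt.continuousWithinAt)
    (fun t ht => hhder t (Set.mem_Icc_of_Ioo ht))
  have hz0 : z 0 = u := by simp [hz]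
  have hz1 : z 1 = w' := by simp [hz]
  have hg0 : g 0 = fderiv ℝ (fun x => F x ^ 2) u (w' - u) := by rw [hg]; simp [hz0]
  have hgc : g c = F w' ^ 2 - F u ^ 2 := by
    rw [hceq, hz1, hz0]; ring
  calc fderiv ℝ (fun x => F x ^ 2) u (w' - u) = g 0 := hg0.symm
    _ ≤ g c := hgmono (Set.left_mem_Icc.2 zero_le_one)
        (Set.mem_Icc_of_Ioo hc) hc.1.le
    _ = F w' ^ 2 - F u ^ 2 := hgc

/-- The fundamental inequality: `Dψ(u)(w) ≤ 2 F(u) F(w)`. -/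
lemma fund_ineq (hF : IsMinkowskiNorm F) {u : E} (hu : u ≠ 0) (w : E) :
    fderiv ℝ (fun x => F x ^ 2) u w ≤ 2 * F u * F w := by
  rcases eq_or_ne w 0 with rfl | hw
  · simp [mink_zero hF]
  have hFu : 0 < F u := hF.pos u hu
  have hFw : 0 < F w := hF.pos w hw
  set w' := (F u / F w) • w with hw'
  have hFw' : F w' = F u := by
    rw [hw', hF.homog _ (div_nonneg hFu.le hFw.le)]
    field_simp
  have hw'ne : w' ≠ 0 := fun h => by rw [h, mink_zero hF] at hFw'; exact hFu.ne hFw'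
  have hkey : fderiv ℝ (fun x => F x ^ 2) u w' ≤ 2 * F u ^ 2 := by
    by_cases hsege : ∀ t ∈ Set.Icc (0:ℝ) 1, u + t • (w' - u) ≠ 0
    · have := segment_ineq hF hsege
      rw [map_sub, hFw', fderiv_psi_self hF hu] at this
      linarith
    · push_neg at hsege
      obtain ⟨t, ht, hzt⟩ := hsege
      have ht0 : t ≠ 0 := by
        intro h; rw [h] at hzt; simp at hzt; exact hu hzt
      have ht1 : t ≠ 1 := by
        intro h; rw [h] at hzt; simp at hzt; exact hw'ne hzt
      have htpos : 0 < t := lt_of_le_of_ne ht.1 (Ne.symm ht0)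
      -- w' = ((t-1)/t) • u, a nonpositive multiple of u
      have hwexp : w' = ((t - 1) / t) • u := by
        have : t • w' = (t - 1) • u := by
          have h0 : u + t • (w' - u) = 0 := hzt
          have : u + t • w' - t • u = 0 := by
            rw [smul_sub] at h0; abel_nf; abel_nf at h0; exact h0
          have h2 : t • w' = t • u - u := by
            have := congrArg (fun x => x + (t • u - u)) this
            simp at this
            abel_nf
            abel_nf at this
            exact this
          rw [h2, sub_smul, one_smul]
        have := congrArg (fun x => t⁻¹ • x) this
        simp only [smul_smul, inv_mul_cancel₀ ht0, one_smul] at this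
        rw [this]
        congr 1
        rw [div_eq_inv_mul]
      have hneg : (t - 1) / t < 0 := by
        apply div_neg_of_neg_of_pos _ htpos
        have := ht.2
        cases lt_or_eq_of_le this with
        | inl h => linarith
        | inr h => exact absurd h ht1
      rw [hwexp, map_smul]
      have h2 : fderiv ℝ (fun x => F x ^ 2) u u = 2 * F u ^ 2 := fderiv_psi_self hF hu
      rw [h2]
      have : ((t-1)/t) * (2 * F u ^ 2) ≤ 0 := by
        apply mul_nonpos_of_nonpos_of_nonneg hneg.le
        positivity
      have h3 : (0:ℝ) < 2 * F u ^ 2 := by positivity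
      calc ((t-1)/t) • (2 * F u ^ 2) = ((t-1)/t) * (2 * F u ^ 2) := rfl
        _ ≤ 0 := this
        _ ≤ 2 * F u ^ 2 := h3.le
  -- transfer from w' back to w
  have hlin : fderiv ℝ (fun x => F x ^ 2) u w' = (F u / F w) * fderiv ℝ (fun x => F x ^ 2) u w := by
    rw [hw', map_smul]; rfl
  rw [hlin] at hkey
  have hpos : 0 < F u / F w := div_pos hFu hFw
  calc fderiv ℝ (fun x => F x ^ 2) u w
      = (F w / F u) * ((F u / F w) * fderiv ℝ (fun x => F x ^ 2) u w) := by
        field_simp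
    _ ≤ (F w / F u) * (2 * F u ^ 2) := by
        apply mul_le_mul_of_nonneg_left hkey (div_pos hFw hFu).le
    _ = 2 * F u * F w := by
        field_simp


/-- If `β = ½ Dψ(u)` (the Legendre image of `u`), then `F*(β) = F(u)` and `β u = F(u)²`. -/
lemma dualNorm_of_gradient [FiniteDimensional ℝ E] [Nontrivial E] (hF : IsMinkowskiNorm F)
    {u : E} (hu : u ≠ 0) {β : E →L[ℝ] ℝ}
    (hβ : ∀ w, β w = (1/2 : ℝ) * fderiv ℝ (fun x => F x ^ 2) u w) :
    dualNorm F β = F u ∧ β u = F u ^ 2 := by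
  have hFu : 0 < F u := hF.pos u hu
  have hβu : β u = F u ^ 2 := by
    rw [hβ, fderiv_psi_self hF hu]; ring
  constructor
  · apply le_antisymm
    · apply dualNorm_le hF
      intro w hw
      rw [hβ]
      have := fund_ineq hF hu w
      have h2 : F u * F w ≤ F u * 1 := mul_le_mul_of_nonneg_left hw hFu.le
      nlinarith
    · have h1 : F ((F u)⁻¹ • u) = 1 := by
        rw [hF.homog _ (inv_nonneg.2 hFu.le), inv_mul_cancel₀ hFu.ne']
      have h2 := le_dualNorm hF β (w := (F u)⁻¹ • u) (le_of_eq h1)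
      rw [map_smul] at h2
      have : (F u)⁻¹ • β u = F u := by
        rw [hβu, smul_eq_mul, pow_two, inv_mul_cancel_left₀ hFu.ne']
      rwa [this] at h2
  · exact hβu

/-- The Legendre condition `F v = F* α`, `α v = (F* α)²` forces `α = ½ Dψ(v)`. -/
lemma gradient_of_legendre [FiniteDimensional ℝ E] [Nontrivial E] (hF : IsMinkowskiNorm F)
    {α : E →L[ℝ] ℝ} {v : E} (hv : v ≠ 0)
    (h1 : F v = dualNorm F α) (h2 : α v = dualNorm F α ^ 2) :
    ∀ w, α w = (1/2 : ℝ) * fderiv ℝ (fun x => F x ^ 2) v w := by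
  set D := dualNorm F α with hD
  have hmax : IsMaxOn (fun u => α u - (1/2 : ℝ) * F u ^ 2) Set.univ v := by
    intro u _
    have ha : α u ≤ D * F u := apply_le_dual_mul hF α u
    have hsq : 0 ≤ (D - F u) ^ 2 := sq_nonneg _
    simp only [Set.mem_setOf_eq]
    have hv2 : α v - (1/2 : ℝ) * F v ^ 2 = (1/2 : ℝ) * D ^ 2 := by
      rw [h2, h1]; ring
    rw [hv2]
    nlinarith
  have hloc : IsLocalMax (fun u => α u - (1/2 : ℝ) * F u ^ 2) v :=
    hmax.isLocalMax Filter.univ_mem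
  have hd : HasFDerivAt (fun u => α u - (1/2 : ℝ) * F u ^ 2)
      (α - (1/2 : ℝ) • fderiv ℝ (fun x => F x ^ 2) v) v := by
    have hψ : HasFDerivAt (fun x => F x ^ 2) (fderiv ℝ (fun x => F x ^ 2) v) v :=
      ((psi_contDiffAt hF hv).differentiableAt (by simp)).hasFDerivAt
    exact α.hasFDerivAt.sub (hψ.const_mul (1/2 : ℝ))
  have hzero := hloc.hasFDerivAt_eq_zero hd
  intro w
  have := ContinuousLinearMap.ext_iff.1 hzero w
  simp only [ContinuousLinearMap.sub_apply, ContinuousLinearMap.smul_apply,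
    ContinuousLinearMap.zero_apply, smul_eq_mul, sub_eq_zero] at this
  exact this


lemma gv_bijective [FiniteDimensional ℝ E] (hF : IsMinkowskiNorm F) {v : E} (hv : v ≠ 0)
    (Gv : E →ₗ[ℝ] (E →L[ℝ] ℝ))
    (hGv : ∀ w u : E, Gv w u = fundamentalTensor F v w u) :
    Function.Bijective Gv := by
  have hinj : Function.Injective Gv := by
    rw [injective_iff_map_eq_zero Gv] at *
    intro w hw
    by_contra hwne
    have h1 : Gv w w = 0 := by rw [hw]; rfl
    have h2 := hF.posdef v hv w hwne
    rw [← hGv w w] at h2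
    linarith
  have hfr : Module.finrank ℝ E = Module.finrank ℝ (E →L[ℝ] ℝ) := by
    have e1 : (E →ₗ[ℝ] ℝ) ≃ₗ[ℝ] (E →L[ℝ] ℝ) := LinearMap.toContinuousLinearMap
    rw [← e1.finrank_eq]
    exact (Subspace.dual_finrank_eq (K := ℝ) (V := E)).symm
  exact ⟨hinj, (LinearMap.injective_iff_surjective_of_finrank_eq_finrank hfr).1 hinj⟩

end Aux

set_option maxHeartbeats 1000000 in
/-- For `α ≠ 0` with Legendre transform `v = L*(α) ≠ 0`, the linear map
`G*_α : E* → E` induced by the fundamental tensor `g*_α` of the dual norm is the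
inverse of the linear isomorphism `G_v : E → E*`, `w ↦ g_v(w, ·)`: that is, `G_v` is
bijective and `g*_α(G_v w, γ) = γ(w)` for all `w ∈ E`, `γ ∈ E*`.
(In coordinates: `g*_{ij}(α) = g^{ij}(L*(α))`.) -/
theorem dual_fundamentalTensor_eq_inverse
    {E : Type*} [NormedAddCommGroup E] [NormedSpace ℝ E] [FiniteDimensional ℝ E]
    {F : E → ℝ} (hF : IsMinkowskiNorm F)
    (α : E →L[ℝ] ℝ) (hα : α ≠ 0) (v : E) (hv : v ≠ 0)
    (hvα : F v = dualNorm F α ∧ α v = (dualNorm F α) ^ 2)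
    (Gv : E →ₗ[ℝ] (E →L[ℝ] ℝ))
    (hGv : ∀ w u : E, Gv w u = fundamentalTensor F v w u) :
    Function.Bijective Gv ∧
      ∀ (w : E) (γ : E →L[ℝ] ℝ),
        fundamentalTensor (fun β : E →L[ℝ] ℝ => dualNorm F β) α (Gv w) γ = γ w := by
  haveI : Nontrivial E := ⟨v, 0, hv⟩
  obtain ⟨h1, h2⟩ := hvα
  have hGvbij : Function.Bijective Gv := gv_bijective hF hv Gv hGv
  refine ⟨hGvbij, ?_⟩
  intro w γ
  -- the Legendre map `L u = ½ Dψ(u)` where `ψ = F²`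
  set L : E → (E →L[ℝ] ℝ) := fun u => (1/2 : ℝ) • fderiv ℝ (fun x => F x ^ 2) u with hLdef
  have hαw : ∀ w', α w' = (1/2 : ℝ) * fderiv ℝ (fun x => F x ^ 2) v w' :=
    gradient_of_legendre hF hv h1 h2
  have hαL : L v = α := by
    ext w'
    simp only [hLdef, ContinuousLinearMap.coe_smul', Pi.smul_apply, smul_eq_mul]
    exact (hαw w').symm
  -- the continuous linear equivalence induced by `Gv`
  let eLin : E ≃ₗ[ℝ] (E →L[ℝ] ℝ) := LinearEquiv.ofBijective Gv hGvbij
  let e : E ≃L[ℝ] (E →L[ℝ] ℝ) := eLin.toContinuousLinearEquiv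
  have he_apply : ∀ u : E, e u = Gv u := fun u => rfl
  -- smoothness of L at v and its derivative
  have hLsm : ContDiffAt ℝ (⊤ : ℕ∞) L v := by
    apply ContDiffOn.contDiffAt _ (isOpen_compl_singleton.mem_nhds hv)
    exact (dpsi_contDiffOn hF).const_smul (1/2 : ℝ)
  have hDL : HasFDerivAt L (e : E →L[ℝ] (E →L[ℝ] ℝ)) v := by
    have hd : DifferentiableAt ℝ (fderiv ℝ fun x => F x ^ 2) v :=
      (dpsi_contDiffAt hF hv).differentiableAt (by simp)
    have h0 : HasFDerivAt L ((1/2 : ℝ) • fderiv ℝ (fderiv ℝ fun x => F x ^ 2) v) v :=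
      hd.hasFDerivAt.const_smul (1/2 : ℝ)
    have heq : (e : E →L[ℝ] (E →L[ℝ] ℝ))
        = (1/2 : ℝ) • fderiv ℝ (fderiv ℝ fun x => F x ^ 2) v := by
      ext w' u'
      have h3 : (e : E →L[ℝ] (E →L[ℝ] ℝ)) w' u' = Gv w' u' := rfl
      rw [h3, hGv w' u', fundamentalTensor_eq]
      simp
    rw [heq]
    exact h0
  have hst : HasStrictFDerivAt L (e : E →L[ℝ] (E →L[ℝ] ℝ)) v :=
    hLsm.hasStrictFDerivAt' hDL (by simp)
  -- the local inverse f of L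
  set f : (E →L[ℝ] ℝ) → E := hst.localInverse L e v with hfdef
  have hfv : f (L v) = v := hst.localInverse_apply_image
  have hright : ∀ᶠ β in nhds (L v), L (f β) = β := hst.eventually_right_inverse
  have hfeq : f = hLsm.localInverse hDL (by simp) := rfl
  have hfsm : ContDiffAt ℝ (⊤ : ℕ∞) f (L v) := by
    rw [hfeq]
    exact hLsm.to_localInverse hDL (by simp)
  have hDf : HasFDerivAt f ((e.symm : (E →L[ℝ] ℝ) →L[ℝ] E)) (L v) :=
    hst.to_localInverse.hasFDerivAt
  have hfne : ∀ᶠ β in nhds (L v), f β ≠ 0 :=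
    hfsm.continuousAt.eventually_ne (by rw [hfv]; exact hv)
  have hDfnbhd : ∀ᶠ β in nhds (L v), DifferentiableAt ℝ f β := by
    have h2 : ContDiffAt ℝ 1 f (L v) := hfsm.of_le (by simp)
    filter_upwards [h2.eventually (by simp)] with β hβ
    exact hβ.differentiableAt one_ne_zero
  -- the squared dual norm agrees with the envelope formula near L v
  set K : (E →L[ℝ] ℝ) → ℝ := fun β => dualNorm F β ^ 2 with hKdef
  have hKeq : ∀ᶠ β in nhds (L v), K β = 2 * β (f β) - F (f β) ^ 2 := by
    filter_upwards [hright, hfne] with β hβ hne0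
    have hgrad : ∀ w', β w' = (1/2 : ℝ) * fderiv ℝ (fun x => F x ^ 2) (f β) w' := by
      intro w'
      conv_lhs => rw [← hβ]
      simp [hLdef]
    obtain ⟨hd1, hd2⟩ := dualNorm_of_gradient hF hne0 hgrad
    simp only [hKdef]
    rw [hd1, hd2]
    ring
  -- evaluation map ι : E → E**
  set ι : E →L[ℝ] ((E →L[ℝ] ℝ) →L[ℝ] ℝ) := ContinuousLinearMap.apply ℝ ℝ with hιdef
  -- the first derivative of K near L v
  have hKder : ∀ᶠ β in nhds (L v), HasFDerivAt K ((2 : ℝ) • (ι (f β))) β := by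
    filter_upwards [hright, hfne, hDfnbhd, hKeq.eventually_nhds] with β hβ hne0 hdf hloc
    have hA : HasFDerivAt (fun γ' : E →L[ℝ] ℝ => γ' (f γ'))
        (ι (f β) + β.comp (fderiv ℝ f β)) β := by
      have hb := isBoundedBilinearMap_apply (𝕜 := ℝ) (E := E) (F := ℝ)
      have hp : HasFDerivAt (fun γ' : E →L[ℝ] ℝ => (γ', f γ'))
          ((ContinuousLinearMap.id ℝ (E →L[ℝ] ℝ)).prod (fderiv ℝ f β)) β :=
        (hasFDerivAt_id β).prodMk hdf.hasFDerivAt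
      have hcomp := (hb.hasFDerivAt (β, f β)).comp β hp
      refine hcomp.congr_fderiv ?_
      ext δ
      simp [IsBoundedBilinearMap.deriv_apply, hιdef]
      try ring
    have hB : HasFDerivAt (fun γ' : E →L[ℝ] ℝ => F (f γ') ^ 2)
        ((fderiv ℝ (fun x => F x ^ 2) (f β)).comp (fderiv ℝ f β)) β := by
      have hdψ : HasFDerivAt (fun x => F x ^ 2) (fderiv ℝ (fun x => F x ^ 2) (f β)) (f β) :=
        ((psi_contDiffAt hF hne0).differentiableAt (by simp)).hasFDerivAt
      exact hdψ.comp β hdf.hasFDerivAt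
    have hΦ : HasFDerivAt (fun γ' : E →L[ℝ] ℝ => 2 * (γ' (f γ')) - F (f γ') ^ 2)
        ((2 : ℝ) • (ι (f β) + β.comp (fderiv ℝ f β))
          - (fderiv ℝ (fun x => F x ^ 2) (f β)).comp (fderiv ℝ f β)) β :=
      (hA.const_mul 2).sub hB
    have hK' : HasFDerivAt K
        ((2 : ℝ) • (ι (f β) + β.comp (fderiv ℝ f β))
          - (fderiv ℝ (fun x => F x ^ 2) (f β)).comp (fderiv ℝ f β)) β :=
      hΦ.congr_of_eventuallyEq hloc
    have hLf : fderiv ℝ (fun x => F x ^ 2) (f β) = (2 : ℝ) • β := by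
      have h3 : (1/2 : ℝ) • fderiv ℝ (fun x => F x ^ 2) (f β) = β := hβ
      have := congrArg (fun T => (2 : ℝ) • T) h3
      simpa [smul_smul] using this
    convert hK' using 1
    rw [hLf]
    ext δ
    simp [hιdef]
    try ring
  -- second derivative of K at L v
  have hfd_ev : fderiv ℝ K =ᶠ[nhds (L v)] fun β => (2 : ℝ) • (ι (f β)) :=
    hKder.mono fun β hβ => hβ.fderiv
  have hsecond : HasFDerivAt (fun β => (2 : ℝ) • (ι (f β)))
      ((2 : ℝ) • (ι.comp (e.symm : (E →L[ℝ] ℝ) →L[ℝ] E))) (L v) := by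
    have hι : HasFDerivAt ι ι (f (L v)) := ContinuousLinearMap.hasFDerivAt (𝕜 := ℝ) (E := E) (F := (E →L[ℝ] ℝ) →L[ℝ] ℝ) (f := ι) (x := f (L v))
    have hcomp := HasFDerivAt.comp (g := ι) (f := f) (L v) hι hDf
    exact hcomp.const_smul (2 : ℝ)
  have h2nd : fderiv ℝ (fderiv ℝ K) (L v)
      = (2 : ℝ) • (ι.comp (e.symm : (E →L[ℝ] ℝ) →L[ℝ] E)) := by
    rw [hfd_ev.fderiv_eq]
    exact hsecond.fderiv
  -- final computation
  rw [← hαL]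
  have hft : fundamentalTensor (fun β : E →L[ℝ] ℝ => dualNorm F β) (L v) (Gv w) γ
      = (1/2 : ℝ) * fderiv ℝ (fderiv ℝ K) (L v) (Gv w) γ :=
    fundamentalTensor_eq (fun β : E →L[ℝ] ℝ => dualNorm F β) (L v) (Gv w) γ
  rw [hft, h2nd]
  have hsymm : e.symm (Gv w) = w := by
    rw [ContinuousLinearEquiv.symm_apply_eq]
    exact (he_apply w).symm
  simp only [ContinuousLinearMap.smul_apply, ContinuousLinearMap.coe_comp', Function.comp_apply,
    hsymm, hιdef, ContinuousLinearMap.apply_apply, smul_eq_mul]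
  try ring
  try {
    have hsymm' : ((e.symm : (E →L[ℝ] ℝ) →L[ℝ] E)) (Gv w) = w := hsymm
    rw [hsymm'] }
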